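/- Let g ∈ L¹(Γ × S¹) be such that for every integer p ≥ 0 and every m ∈ ℤ with |m| > p and p − m even, the function (α, β) ↦ e^{im(β+α)} (sin α)^p (cos α) g(e^{iβ}, e^{i(α+β)}) is absolutely integrable on (−π,π]² and ∫_{−π}^{π} ∫_{−π}^{π} e^{im(β+α)} (sin α)^p (cos α) g(e^{iβ}, e^{i(α+β)}) dα dβ = 0. Then the Fourier coefficients of g satisfy g_{n,k} = (−1)^k g_{n+2k,−k} for all odd n ≤ −1 and all k ≤ 0. -/

import Mathlib

/-!
With `z = e^{iα}` one has `sin^p α · cos α = ((2i)^p · 2)⁻¹ (z - z⁻¹)^p (z + z⁻¹)`, and after the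
substitution `θ = α + β` the moment with parameters `(p, m)` becomes a binomial combination of the
Fourier coefficients `F j = g_{-(m+j), j}` over `|j| ≤ p + 1`, `j ≡ p + 1 (mod 2)`. The coefficient
of `z^{-j}` is `(-1)^p` times that of `z^j`, so once `F j = (-1)^j F (-j)` is known for `|j| ≤ p`,
every pair of terms cancels except the extreme one, and the vanishing moment gives the symmetry for
`j = p + 1`. Induction on `|j|` with `m` fixed gives `g_{n,k} = (-1)^k g_{n+2k,-k}` for
`m = -(n + k)`.
-/

open MeasureTheory Filter Set

noncomputable section

/-- Fourier coefficients of a function on the torus `Γ × S¹`. -/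
def fcoef (g : ℝ → ℝ → ℂ) (n k : ℤ) : ℂ :=
  (1 / (2 * Real.pi) ^ 2 : ℂ) *
    ∫ β in Ioc (-Real.pi) Real.pi,
      ∫ θ in Ioc (-Real.pi) Real.pi,
        g β θ * Complex.exp (-Complex.I * (n : ℂ) * (θ : ℂ)) *
          Complex.exp (-Complex.I * (k : ℂ) * (β : ℂ))

open Real
open Complex (I)

theorem sin_pow_mul_cos_eq_sum (p : ℕ) (α : ℝ) :
    (sin α : ℂ) ^ p * (cos α : ℂ) = ((2 * I) ^ p * 2)⁻¹ *
      ∑ x ∈ Finset.range (p + 1) ×ˢ ({1, -1} : Finset ℤ),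
        (p.choose x.1 : ℂ) * (-1) ^ (x.1 + p) *
          Complex.exp (I * ((2 * x.1 - p + x.2 : ℤ) : ℂ) * α) := by
  set z := Complex.exp (I * α)
  have hz : z ≠ 0 := Complex.exp_ne_zero _
  have hexp : ∀ j : ℤ, Complex.exp (I * (j : ℂ) * α) = z ^ j := fun j => by
    rw [← Complex.exp_int_mul]
    ring_nf
  have hzα : Complex.exp (α * I) = z := by rw [mul_comm]
  have hsin : (sin α : ℂ) = (z - z⁻¹) / (2 * I) := by
    rw [Complex.ofReal_sin, Complex.sin, neg_mul, Complex.exp_neg, hzα]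
    field_simp
    ring_nf
    rw [Complex.I_sq]
    ring
  have hcos : (cos α : ℂ) = (z + z⁻¹) / 2 := by
    rw [Complex.ofReal_cos, Complex.cos, neg_mul, Complex.exp_neg, hzα, add_comm]
  rw [hsin, hcos, div_pow, sub_pow, Finset.sum_product]
  simp only [Finset.sum_pair (show (1 : ℤ) ≠ -1 by decide), hexp]
  rw [div_mul_div_comm, div_eq_inv_mul, Finset.sum_mul]
  congr 1
  refine Finset.sum_congr rfl fun l hl => ?_
  have hlp : l ≤ p := Nat.lt_succ_iff.mp (Finset.mem_range.mp hl)
  have hpow : ∀ ε : ℤ, z ^ (2 * (l : ℤ) - p + ε) = z ^ l * z⁻¹ ^ (p - l) * z ^ ε := fun ε => by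
    rw [show 2 * (l : ℤ) - p + ε = l - ((p - l : ℕ) : ℤ) + ε by push_cast [hlp]; ring,
      zpow_add₀ hz, zpow_sub₀ hz, zpow_natCast, zpow_natCast, inv_pow, div_eq_mul_inv]
  rw [hpow, hpow, zpow_one, zpow_neg_one]
  ring

namespace Function.Periodic

variable {E : Type*} [NormedAddCommGroup E] {f : ℝ → E} {T : ℝ}

theorem integrableOn_Ioc_comp_add_right (hf : Function.Periodic f T) (hT : 0 < T) {t : ℝ}
    (hint : IntegrableOn f (Ioc t (t + T))) (c : ℝ) :
    IntegrableOn (fun x => f (x + c)) (Ioc t (t + T)) := by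
  have hle : t ≤ t + T := by linarith
  rw [← intervalIntegrable_iff_integrableOn_Ioc_of_le hle] at hint ⊢
  simpa using (hf.intervalIntegrable hT.ne' hint (t + c) (t + T + c)).comp_add_right c

theorem setIntegral_Ioc_comp_add_right [NormedSpace ℝ E] (hf : Function.Periodic f T)
    (hT : 0 < T) (t c : ℝ) :
    ∫ x in Ioc t (t + T), f (x + c) = ∫ x in Ioc t (t + T), f x := by
  have hle : t ≤ t + T := by linarith
  rw [← intervalIntegral.integral_of_le hle, ← intervalIntegral.integral_of_le hle,
    intervalIntegral.integral_comp_add_right, add_right_comm, hf.intervalIntegral_add_eq]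

end Function.Periodic

theorem Ioc_neg_pi_pi_eq : Ioc (-π) π = Ioc (-π) (-π + 2 * π) := by
  congr 1
  ring

theorem exp_I_mul_add_mul_exp_I_mul (m j : ℤ) (α β : ℝ) :
    Complex.exp (I * m * (β + α)) * Complex.exp (I * j * α) =
      Complex.exp (-I * j * β) * Complex.exp (I * ((m + j : ℤ) : ℂ) * ((α + β : ℝ) : ℂ)) := by
  rw [← Complex.exp_add, ← Complex.exp_add]
  push_cast
  ring_nf

theorem integrableOn_exp_mul_exp_mul_comp_add {f : ℝ → ℂ} (hf : Function.Periodic f (2 * π))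
    (hint : IntegrableOn f (Ioc (-π) π)) (m j : ℤ) (β : ℝ) :
    IntegrableOn
      (fun α : ℝ => Complex.exp (I * m * (β + α)) * Complex.exp (I * j * α) * f (α + β))
      (Ioc (-π) π) := by
  rw [Ioc_neg_pi_pi_eq] at hint ⊢
  refine ((hf.integrableOn_Ioc_comp_add_right two_pi_pos hint β).bdd_mul (c := 1) (by fun_prop)
    (ae_of_all _ fun α => ?_))
  simp [Complex.norm_exp]

theorem integral_exp_mul_exp_mul_comp_add {f : ℝ → ℂ} (hf : Function.Periodic f (2 * π))
    (m j : ℤ) (β : ℝ) :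
    ∫ α in Ioc (-π) π, Complex.exp (I * m * (β + α)) * Complex.exp (I * j * α) * f (α + β) =
      Complex.exp (-I * j * β) *
        ∫ θ in Ioc (-π) π, Complex.exp (I * ((m + j : ℤ) : ℂ) * θ) * f θ := by
  have hper : Function.Periodic
      (fun θ : ℝ => Complex.exp (I * ((m + j : ℤ) : ℂ) * θ) * f θ) (2 * π) := by
    refine Function.Periodic.mul (fun θ => ?_) hf
    rw [Complex.ofReal_add, mul_add, Complex.exp_add,
      show I * ((m + j : ℤ) : ℂ) * ((2 * π : ℝ) : ℂ) = (m + j : ℤ) * (2 * π * I) by push_cast; ring,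
      Complex.exp_int_mul_two_pi_mul_I, mul_one]
  simp only [exp_I_mul_add_mul_exp_I_mul, mul_assoc (Complex.exp (-I * j * β))]
  rw [integral_const_mul, Ioc_neg_pi_pi_eq, hper.setIntegral_Ioc_comp_add_right two_pi_pos]

theorem MeasureTheory.IntegrableOn.integrable_restrict_prod {E : Type*} [NormedAddCommGroup E]
    {f : ℝ × ℝ → E} {s t : Set ℝ} (hf : IntegrableOn f (s ×ˢ t)) :
    Integrable f ((volume.restrict s).prod (volume.restrict t)) := by
  rwa [Measure.prod_restrict, ← Measure.volume_eq_prod]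

section Torus

variable {g : ℝ → ℝ → ℂ}

theorem integrableOn_exp_mul_integral_exp_mul
    (hg : IntegrableOn (fun q : ℝ × ℝ => g q.1 q.2) (Ioc (-π) π ×ˢ Ioc (-π) π)) (a j : ℤ) :
    IntegrableOn (fun β : ℝ => Complex.exp (-I * j * β) *
      ∫ θ in Ioc (-π) π, Complex.exp (I * a * θ) * g β θ) (Ioc (-π) π) := by
  have hinner : Integrable (fun q : ℝ × ℝ => Complex.exp (I * a * q.2) * g q.1 q.2)
      ((volume.restrict (Ioc (-π) π)).prod (volume.restrict (Ioc (-π) π))) :=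
    hg.integrable_restrict_prod.bdd_mul (c := 1) (by fun_prop)
      (ae_of_all _ fun q => by simp [Complex.norm_exp])
  exact hinner.integral_prod_left.bdd_mul (c := 1) (by fun_prop)
    (ae_of_all _ fun β => by simp [Complex.norm_exp])

theorem integral_exp_mul_integral_exp_mul (a j : ℤ) :
    ∫ β in Ioc (-π) π, Complex.exp (-I * j * β) *
      ∫ θ in Ioc (-π) π, Complex.exp (I * a * θ) * g β θ = (2 * π) ^ 2 * fcoef g (-a) j := by
  have hπ : ((2 * π) ^ 2 : ℂ) ≠ 0 := by exact_mod_cast (by positivity : (2 * π) ^ 2 ≠ 0)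
  rw [fcoef, ← mul_assoc, mul_one_div_cancel hπ, one_mul]
  congr 1 with β
  rw [← integral_const_mul]
  congr 1 with θ
  push_cast
  ring_nf

theorem integral_exp_mul_trigPoly_mul_comp_add {ι : Type*}
    (hper : ∀ β, Function.Periodic (g β) (2 * π))
    (hg : IntegrableOn (fun q : ℝ × ℝ => g q.1 q.2) (Ioc (-π) π ×ˢ Ioc (-π) π))
    (m : ℤ) (s : Finset ι) (c : ι → ℂ) (k : ι → ℤ) (h : ℝ → ℂ)
    (hh : ∀ α, h α = ∑ x ∈ s, c x * Complex.exp (I * k x * α)) :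
    ∫ β in Ioc (-π) π, ∫ α in Ioc (-π) π, Complex.exp (I * m * (β + α)) * h α * g β (α + β) =
      (2 * π) ^ 2 * ∑ x ∈ s, c x * fcoef g (-(m + k x)) (k x) := by
  have hinner : ∀ᵐ β : ℝ ∂(volume.restrict (Ioc (-π) π)),
      ∫ α in Ioc (-π) π, Complex.exp (I * m * (β + α)) * h α * g β (α + β) =
        ∑ x ∈ s, c x * (Complex.exp (-I * k x * β) *
          ∫ θ in Ioc (-π) π, Complex.exp (I * ((m + k x : ℤ) : ℂ) * θ) * g β θ) := by
    filter_upwards [hg.integrable_restrict_prod.prod_right_ae] with β hβ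
    have hterm : ∀ x (α : ℝ), Complex.exp (I * m * (β + α)) *
        (c x * Complex.exp (I * k x * α)) * g β (α + β) =
          c x * (Complex.exp (I * m * (β + α)) * Complex.exp (I * k x * α) * g β (α + β)) :=
      fun x α => by ring
    simp_rw [hh, Finset.mul_sum, Finset.sum_mul, hterm]
    rw [integral_finsetSum _ fun x _ =>
      (integrableOn_exp_mul_exp_mul_comp_add (hper β) hβ m (k x) β).const_mul (c x)]
    refine Finset.sum_congr rfl fun x _ => ?_
    rw [integral_const_mul, integral_exp_mul_exp_mul_comp_add (hper β)]
  rw [integral_congr_ae hinner, integral_finsetSum _ fun x _ =>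
    (integrableOn_exp_mul_integral_exp_mul hg _ _).const_mul (c x), Finset.mul_sum]
  refine Finset.sum_congr rfl fun x _ => ?_
  rw [integral_const_mul, integral_exp_mul_integral_exp_mul]
  ring

theorem integral_moment_eq_sum_fcoef (hper : ∀ β, Function.Periodic (g β) (2 * π))
    (hg : IntegrableOn (fun q : ℝ × ℝ => g q.1 q.2) (Ioc (-π) π ×ˢ Ioc (-π) π)) (p : ℕ) (m : ℤ) :
    ∫ β in Ioc (-π) π, ∫ α in Ioc (-π) π,
        Complex.exp (I * m * (β + α)) * (sin α : ℂ) ^ p * (cos α : ℂ) * g β (α + β) =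
      (2 * π) ^ 2 * ((2 * I) ^ p * 2)⁻¹ *
        ∑ x ∈ Finset.range (p + 1) ×ˢ ({1, -1} : Finset ℤ),
          (p.choose x.1 : ℂ) * (-1) ^ (x.1 + p) *
            fcoef g (-(m + (2 * x.1 - p + x.2))) (2 * x.1 - p + x.2) := by
  have h := integral_exp_mul_trigPoly_mul_comp_add hper hg m _
    (fun x : ℕ × ℤ => ((2 * I) ^ p * 2)⁻¹ * ((p.choose x.1 : ℂ) * (-1) ^ (x.1 + p)))
    (fun x : ℕ × ℤ => 2 * x.1 - p + x.2) (fun α => (sin α : ℂ) ^ p * (cos α : ℂ)) fun α => by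
      rw [sin_pow_mul_cos_eq_sum, Finset.mul_sum]
      exact Finset.sum_congr rfl fun x _ => by ring
  simp only [mul_assoc] at h ⊢
  rw [h, ← Finset.mul_sum]

end Torus

section SignSymmetry

variable {K : Type*} [Field K]

theorem neg_one_zpow_add_neg_one_pow_of_odd {j : ℤ} {p : ℕ} (h : Odd (j + p)) :
    (-1 : K) ^ j + (-1) ^ p = 0 := by
  have hprod : (-1 : K) ^ j * (-1) ^ p = -1 := by
    rw [← zpow_natCast, ← zpow_add₀ (neg_ne_zero.mpr one_ne_zero), h.neg_one_zpow]
  have hsq : (-1 : K) ^ p * (-1) ^ p = 1 := by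
    rw [← mul_pow, neg_one_mul, neg_neg, one_pow]
  linear_combination (-1 : K) ^ p * hprod - (-1 : K) ^ j * hsq

theorem eq_neg_one_zpow_mul_neg {F : ℤ → K} {j : ℤ} (h : F j = (-1) ^ j * F (-j)) :
    F (-j) = (-1) ^ (-j) * F (-(-j)) := by
  rw [neg_neg, h, ← mul_assoc, ← zpow_add₀ (neg_ne_zero.mpr one_ne_zero), neg_add_cancel,
    zpow_zero, one_mul]

theorem sum_choose_mul_eq_of_symm (p : ℕ) (F : ℤ → K)
    (hF : ∀ i : ℤ, |i| ≤ p → Odd (i + p) → F i = (-1) ^ i * F (-i)) :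
    ∑ x ∈ Finset.range (p + 1) ×ˢ ({1, -1} : Finset ℤ),
        (p.choose x.1 : K) * (-1) ^ (x.1 + p) * F (2 * x.1 - p + x.2) =
      F (p + 1) + (-1) ^ p * F (-(p + 1)) := by
  set a : ℕ → K := fun l => (p.choose l : K) * (-1) ^ (l + p)
  have hreflect : ∑ l ∈ Finset.range (p + 1), a l * F (2 * l - p - 1) =
      ∑ l ∈ Finset.range (p + 1), (-1) ^ p * a l * F (-(2 * l - p + 1)) := by
    rw [← Finset.sum_range_reflect]
    refine Finset.sum_congr rfl fun l hl => ?_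
    have hlp : l ≤ p := Nat.lt_succ_iff.mp (Finset.mem_range.mp hl)
    simp only [a, add_tsub_cancel_right, Nat.choose_symm hlp]
    have hsign : (-1 : K) ^ (p - l + p) = (-1) ^ p * (-1) ^ (l + p) := by
      rw [← pow_add, show p + (l + p) = p - l + p + 2 * l by omega, pow_add _ (p - l + p),
        pow_mul, neg_one_sq, one_pow, mul_one]
    rw [show 2 * ((p - l : ℕ) : ℤ) - p - 1 = -(2 * l - p + 1) by push_cast [hlp]; ring, hsign]
    ring
  have hvanish : ∀ l ∈ Finset.range p,
      a l * (F (2 * l - p + 1) + (-1) ^ p * F (-(2 * l - p + 1))) = 0 := by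
    intro l hl
    have hlp : l < p := Finset.mem_range.mp hl
    rw [hF _ (abs_le.mpr ⟨by omega, by omega⟩) ⟨l, by ring⟩, ← add_mul,
      neg_one_zpow_add_neg_one_pow_of_odd ⟨l, by ring⟩, zero_mul, mul_zero]
  calc _ = ∑ l ∈ Finset.range (p + 1), (a l * F (2 * l - p + 1) + a l * F (2 * l - p - 1)) := by
        simp only [Finset.sum_product, Finset.sum_pair (show (1 : ℤ) ≠ -1 by decide),
          ← sub_eq_add_neg, a]
    _ = ∑ l ∈ Finset.range (p + 1),
          a l * (F (2 * l - p + 1) + (-1) ^ p * F (-(2 * l - p + 1))) := by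
        rw [Finset.sum_add_distrib, hreflect, ← Finset.sum_add_distrib]
        exact Finset.sum_congr rfl fun l _ => by ring
    _ = a p * (F (p + 1) + (-1) ^ p * F (-(p + 1))) := by
        rw [Finset.sum_range_succ, Finset.sum_eq_zero hvanish, zero_add]
        ring_nf
    _ = _ := by
        simp only [a, Nat.choose_self, Nat.cast_one, one_mul, ← two_mul, pow_mul, neg_one_sq,
          one_pow]

theorem eq_neg_one_zpow_mul_of_sum_choose_eq_zero (F : ℤ → K) (m : ℤ)
    (h : ∀ p : ℕ, (p : ℤ) < m → Even ((p : ℤ) - m) →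
      ∑ x ∈ Finset.range (p + 1) ×ˢ ({1, -1} : Finset ℤ),
        (p.choose x.1 : K) * (-1) ^ (x.1 + p) * F (2 * x.1 - p + x.2) = 0)
    {j : ℤ} (hj : |j| < m) (hjm : Odd (j + m)) : F j = (-1) ^ j * F (-j) := by
  suffices ∀ N : ℕ, ∀ j : ℤ, j.natAbs = N → |j| < m → Odd (j + m) → F j = (-1) ^ j * F (-j) from
    this _ j rfl hj hjm
  intro N
  induction N using Nat.strong_induction_on with | _ N ih =>
  intro j hjN hj hjm
  rw [abs_lt] at hj
  rw [Int.odd_iff] at hjm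
  rcases N with _ | p
  · simp [Int.natAbs_eq_zero.mp hjN]
  have hsucc : F (p + 1) = (-1) ^ ((p : ℤ) + 1) * F (-(p + 1)) := by
    have hsum := h p (by omega) (Int.even_iff.mpr (by omega))
    rw [sum_choose_mul_eq_of_symm p F fun i hi hip => by
      rw [abs_le] at hi
      rw [Int.odd_iff] at hip
      exact ih i.natAbs (by omega) i rfl (abs_lt.mpr ⟨by omega, by omega⟩)
        (Int.odd_iff.mpr (by omega))] at hsum
    rw [zpow_add_one₀ (neg_ne_zero.mpr one_ne_zero), zpow_natCast]
    linear_combination hsum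
  obtain ⟨n, rfl | rfl⟩ := Int.eq_nat_or_neg j
  · obtain rfl : n = p + 1 := by simpa using hjN
    exact_mod_cast hsucc
  · obtain rfl : n = p + 1 := by simpa using hjN
    exact_mod_cast eq_neg_one_zpow_mul_neg hsucc

end SignSymmetry

/-- Remark 6.3: the GGHL moment conditions (with `|m| > p` and `p - m` even)
yield the moment constraints `g_{n,k} = (-1)^k g_{n+2k,-k}` for odd `n ≤ -1`, `k ≤ 0`. -/
theorem stmt8 (g : ℝ → ℝ → ℂ)
    (hgper : ∀ β θ : ℝ, g (β + 2 * Real.pi) θ = g β θ ∧ g β (θ + 2 * Real.pi) = g β θ)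
    (hgint : IntegrableOn (fun q : ℝ × ℝ => g q.1 q.2)
      (Ioc (-Real.pi) Real.pi ×ˢ Ioc (-Real.pi) Real.pi))
    (hmom : ∀ p : ℕ, ∀ m : ℤ, (p : ℤ) < |m| → Even ((p : ℤ) - m) →
      IntegrableOn (fun q : ℝ × ℝ =>
        Complex.exp (Complex.I * (m : ℂ) * ((q.1 : ℂ) + (q.2 : ℂ))) *
          (Real.sin q.2 : ℂ) ^ p * (Real.cos q.2 : ℂ) * g q.1 (q.2 + q.1))
        (Ioc (-Real.pi) Real.pi ×ˢ Ioc (-Real.pi) Real.pi) ∧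
      (∫ β in Ioc (-Real.pi) Real.pi, ∫ α in Ioc (-Real.pi) Real.pi,
        Complex.exp (Complex.I * (m : ℂ) * ((β : ℂ) + (α : ℂ))) *
          (Real.sin α : ℂ) ^ p * (Real.cos α : ℂ) * g β (α + β)) = 0) :
    ∀ n k : ℤ, Odd n → n ≤ -1 → k ≤ 0 →
      fcoef g n k = (-1 : ℂ) ^ k * fcoef g (n + 2 * k) (-k) := by
  intro n k hn hn1 hk
  have hsymm := eq_neg_one_zpow_mul_of_sum_choose_eq_zero
    (fun j => fcoef g (-(-(n + k) + j)) j) (-(n + k)) (fun p hp hpm => by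
      have hmoment := (hmom p _ (by rwa [abs_of_pos (by omega)]) hpm).2
      rw [integral_moment_eq_sum_fcoef (fun β θ => (hgper β θ).2) hgint] at hmoment
      exact (mul_eq_zero.mp hmoment).resolve_left (by simp [Real.pi_ne_zero, Complex.I_ne_zero]))
    (j := k) (by rw [abs_of_nonpos hk]; omega)
    (by rw [show k + -(n + k) = -n by ring]; exact hn.neg)
  rw [show n + 2 * k = -(-(n + k) + -k) by ring]
  convert hsymm using 2
  ring
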